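/- Let h > 0 and let ū : ℤ × ℝ → ℝ be such that ū(n, ·) is smooth for each n and, for every j ≥ 0, the series Σ_{k=−∞}^{n−1} ∂_x̄^j ū(k, x̄) converges absolutely, locally uniformly in x̄ (so that (Δ⁻¹f)(n, x̄) = Σ_{k=−∞}^{n−1} f(k, x̄) is defined for the relevant functions f and commutes with ∂_x̄). Define the differential-difference KP flows K̄₁(ū) = ū_x̄, K̄₂(ū) = ū_x̄x̄ + 2Δ⁻¹ū_x̄x̄ − 2h⁻¹ū_x̄ + 2ū·ū_x̄, the non-isospectral flow σ̄₂(ū) = h x̄·K̄₂(ū) + (x̄ + hn)·K̄₁(ū) + h ū_x̄ + 3h Δ⁻¹ū_x̄ + h ū² − ū, and its Gâteaux derivative σ̄₂'(ū)[w] = h x̄·(w_x̄x̄ + 2Δ⁻¹w_x̄x̄ − 2h⁻¹w_x̄ + 2w·ū_x̄ + 2ū·w_x̄) + (x̄ + hn)·w_x̄ + h w_x̄ + 3h Δ⁻¹w_x̄ + 2h ū·w − w. Then pointwise on ℤ × ℝ: ∂_x̄(σ̄₂(ū)) − σ̄₂'(ū)[ū_x̄] = h·K̄₂(ū) + K̄₁(ū).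 Equivalently, ⟦K̄₁, σ̄₂⟧ = 1·(h K̄₂ + K̄₁), the (l, r) = (1, 2) instance of the relation ⟦K̄_l, σ̄_r⟧ = l(h K̄_{l+r−1} + K̄_{l+r−2}) of the differential-difference KP flow algebra. -/

import Mathlib

/-- Partial derivative in the continuous variable `x̄`. -/
noncomputable def pdxb (f : ℤ × ℝ → ℝ) : ℤ × ℝ → ℝ := fun p => deriv (fun x => f (p.1, x)) p.2

/-- `(Δ⁻¹f)(n, x̄) = Σ_{k=−∞}^{n−1} f(k, x̄)`, the inverse of the forward difference. -/
noncomputable def Dinv (f : ℤ × ℝ → ℝ) : ℤ × ℝ → ℝ :=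
  fun p => ∑' k : ℕ, f (p.1 - 1 - (k : ℤ), p.2)

/-- The differential-difference KP flow `K̄₁(ū) = ū_x̄`. -/
noncomputable def K1b (u : ℤ × ℝ → ℝ) : ℤ × ℝ → ℝ := pdxb u

/-- The differential-difference KP flow
`K̄₂(ū) = ū_x̄x̄ + 2Δ⁻¹ū_x̄x̄ − 2h⁻¹ū_x̄ + 2ū·ū_x̄`. -/
noncomputable def K2b (h : ℝ) (u : ℤ × ℝ → ℝ) : ℤ × ℝ → ℝ :=
  fun p => pdxb (pdxb u) p + 2 * Dinv (pdxb (pdxb u)) p - 2 * h⁻¹ * pdxb u p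
    + 2 * u p * pdxb u p

/-- The non-isospectral differential-difference KP flow
`σ̄₂(ū) = h x̄·K̄₂(ū) + (x̄ + hn)·K̄₁(ū) + h ū_x̄ + 3h Δ⁻¹ū_x̄ + h ū² − ū`. -/
noncomputable def sigma2b (h : ℝ) (u : ℤ × ℝ → ℝ) : ℤ × ℝ → ℝ :=
  fun p => h * p.2 * K2b h u p + (p.2 + h * (p.1 : ℝ)) * K1b u p
    + h * pdxb u p + 3 * h * Dinv (pdxb u) p + h * (u p) ^ 2 - u p

/-- The Gâteaux derivative `σ̄₂'(ū)[w] = h x̄·(w_x̄x̄ + 2Δ⁻¹w_x̄x̄ − 2h⁻¹w_x̄ + 2w·ū_x̄ + 2ū·w_x̄)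
+ (x̄ + hn)·w_x̄ + h w_x̄ + 3h Δ⁻¹w_x̄ + 2h ū·w − w`. -/
noncomputable def sigma2b' (h : ℝ) (u w : ℤ × ℝ → ℝ) : ℤ × ℝ → ℝ :=
  fun p => h * p.2 * (pdxb (pdxb w) p + 2 * Dinv (pdxb (pdxb w)) p - 2 * h⁻¹ * pdxb w p
      + 2 * w p * pdxb u p + 2 * u p * pdxb w p)
    + (p.2 + h * (p.1 : ℝ)) * pdxb w p + h * pdxb w p + 3 * h * Dinv (pdxb w) p
    + 2 * h * u p * w p - w p

lemma tsum_iteratedDeriv_hasDerivAt' (ubar : ℤ × ℝ → ℝ)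
    (hsmooth : ∀ n : ℤ, ContDiff ℝ (⊤ : ℕ∞) (fun x => ubar (n, x)))
    (hconv : ∀ (j : ℕ) (n : ℤ),
      (∀ x : ℝ, Summable (fun k : ℕ => |iteratedDeriv j (fun y => ubar (n - 1 - (k : ℤ), y)) x|)) ∧
      TendstoLocallyUniformly
        (fun (N : ℕ) (x : ℝ) => ∑ k ∈ Finset.range N,
          iteratedDeriv j (fun y => ubar (n - 1 - (k : ℤ), y)) x)
        (fun x => ∑' k : ℕ, iteratedDeriv j (fun y => ubar (n - 1 - (k : ℤ), y)) x)
        Filter.atTop)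
    (j : ℕ) (n : ℤ) (x : ℝ) :
    HasDerivAt (fun y => ∑' k : ℕ, iteratedDeriv j (fun t => ubar (n - 1 - (k : ℤ), t)) y)
      (∑' k : ℕ, iteratedDeriv (j + 1) (fun t => ubar (n - 1 - (k : ℤ), t)) x) x := by
  refine hasDerivAt_of_tendstoLocallyUniformlyOn (s := Set.univ) isOpen_univ
    (f := fun N y => ∑ k ∈ Finset.range N, iteratedDeriv j (fun t => ubar (n - 1 - (k : ℤ), t)) y)
    (f' := fun N y => ∑ k ∈ Finset.range N,
      iteratedDeriv (j + 1) (fun t => ubar (n - 1 - (k : ℤ), t)) y)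
    (tendstoLocallyUniformlyOn_univ.mpr (hconv (j + 1) n).2) ?_ ?_ (Set.mem_univ x)
  · refine Filter.Eventually.of_forall (fun N y _ => HasDerivAt.fun_sum (fun k _ => ?_))
    have hd : DifferentiableAt ℝ (iteratedDeriv j (fun t => ubar (n - 1 - (k : ℤ), t))) y :=
      ((hsmooth (n - 1 - (k : ℤ))).differentiable_iteratedDeriv j (by exact_mod_cast ENat.coe_lt_top j)).differentiableAt
    simpa [iteratedDeriv_succ] using hd.hasDerivAt
  · intro y _
    exact (((hconv j n).1 y).of_abs).hasSum.tendsto_sum_nat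

/-- The `(l, r) = (1, 2)` instance `⟦K̄₁, σ̄₂⟧ = h K̄₂ + K̄₁` of the differential-difference
KP flow algebra relation `⟦K̄_l, σ̄_r⟧ = l(h K̄_{l+r−1} + K̄_{l+r−2})`: for `h > 0` and `ū`
smooth in `x̄` with all partial sums `Σ_{k=−∞}^{n−1} ∂_x̄^j ū(k, x̄)` converging absolutely,
locally uniformly in `x̄`, one has `∂_x̄(σ̄₂(ū)) − σ̄₂'(ū)[ū_x̄] = h·K̄₂(ū) + K̄₁(ū)`
pointwise on `ℤ × ℝ`. -/
theorem ddkp_K1_sigma2_bracket (h : ℝ) (hh : 0 < h) (ubar : ℤ × ℝ → ℝ)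
    (hsmooth : ∀ n : ℤ, ContDiff ℝ (⊤ : ℕ∞) (fun x => ubar (n, x)))
    (hconv : ∀ (j : ℕ) (n : ℤ),
      (∀ x : ℝ, Summable (fun k : ℕ => |iteratedDeriv j (fun y => ubar (n - 1 - (k : ℤ), y)) x|)) ∧
      TendstoLocallyUniformly
        (fun (N : ℕ) (x : ℝ) => ∑ k ∈ Finset.range N,
          iteratedDeriv j (fun y => ubar (n - 1 - (k : ℤ), y)) x)
        (fun x => ∑' k : ℕ, iteratedDeriv j (fun y => ubar (n - 1 - (k : ℤ), y)) x)
        Filter.atTop) :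
    ∀ p : ℤ × ℝ,
      pdxb (sigma2b h ubar) p - sigma2b' h ubar (pdxb ubar) p
        = h * K2b h ubar p + K1b ubar p := by
  rintro ⟨n, x⟩
  -- differentiability of the iterated derivatives
  have hd1 : Differentiable ℝ (deriv (fun t => ubar (n, t))) := by
    have := (hsmooth n).differentiable_iteratedDeriv 1 (by simp)
    rwa [iteratedDeriv_one] at this
  have hd2 : Differentiable ℝ (deriv (deriv (fun t => ubar (n, t)))) := by
    have := (hsmooth n).differentiable_iteratedDeriv 2 (WithTop.coe_lt_coe.mpr (ENat.coe_lt_top 2))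
    rwa [iteratedDeriv_succ, iteratedDeriv_one] at this
  have hu0 : HasDerivAt (fun t => ubar (n, t)) (deriv (fun t => ubar (n, t)) x) x :=
    (((hsmooth n).differentiable (by simp)) x).hasDerivAt
  have hu1 : HasDerivAt (deriv (fun t => ubar (n, t)))
      (deriv (deriv (fun t => ubar (n, t))) x) x := (hd1 x).hasDerivAt
  have hu2 : HasDerivAt (deriv (deriv (fun t => ubar (n, t))))
      (deriv (deriv (deriv (fun t => ubar (n, t)))) x) x := (hd2 x).hasDerivAt
  have hS1 := tsum_iteratedDeriv_hasDerivAt' ubar hsmooth hconv 1 n x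
  have hS2 := tsum_iteratedDeriv_hasDerivAt' ubar hsmooth hconv 2 n x
  simp only [iteratedDeriv_succ, iteratedDeriv_one, iteratedDeriv_zero] at hS1 hS2
  -- derivative of K2 part
  have hK2 := ((hu2.add (hS2.const_mul 2)).sub (hu1.const_mul (2 * h⁻¹))).add
    ((hu0.const_mul 2).mul hu1)
  have H := (((((((hasDerivAt_id x).const_mul h).mul hK2).add
      (((hasDerivAt_id x).add_const (h * (n : ℝ))).mul hu1)).add
      (hu1.const_mul h)).add (hS1.const_mul (3 * h))).add
      ((hu0.pow 2).const_mul h)).sub hu0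
  have key : pdxb (sigma2b h ubar) (n, x) = _ := H.deriv
  rw [key]
  have eS' : sigma2b' h ubar (pdxb ubar) (n, x) =
      h * x * (deriv (deriv (deriv (fun t => ubar (n, t)))) x
        + 2 * (∑' k : ℕ, deriv (deriv (deriv (fun t => ubar (n - 1 - (k : ℤ), t)))) x)
        - 2 * h⁻¹ * deriv (deriv (fun t => ubar (n, t))) x
        + 2 * deriv (fun t => ubar (n, t)) x * deriv (fun t => ubar (n, t)) x
        + 2 * ubar (n, x) * deriv (deriv (fun t => ubar (n, t))) x)
      + (x + h * (n : ℝ)) * deriv (deriv (fun t => ubar (n, t))) x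
      + h * deriv (deriv (fun t => ubar (n, t))) x
      + 3 * h * (∑' k : ℕ, deriv (deriv (fun t => ubar (n - 1 - (k : ℤ), t))) x)
      + 2 * h * ubar (n, x) * deriv (fun t => ubar (n, t)) x
      - deriv (fun t => ubar (n, t)) x := rfl
  have eRHS : h * K2b h ubar (n, x) + K1b ubar (n, x) =
      h * (deriv (deriv (fun t => ubar (n, t))) x
        + 2 * (∑' k : ℕ, deriv (deriv (fun t => ubar (n - 1 - (k : ℤ), t))) x)
        - 2 * h⁻¹ * deriv (fun t => ubar (n, t)) x
        + 2 * ubar (n, x) * deriv (fun t => ubar (n, t)) x)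
      + deriv (fun t => ubar (n, t)) x := rfl
  rw [eS', eRHS]
  simp only [id_eq, Pi.add_apply, Pi.sub_apply, Pi.mul_apply]
  set T1 : ℝ := ∑' k : ℕ, deriv (fun t => ubar (n - 1 - (k : ℤ), t)) x with hT1
  set T2 : ℝ := ∑' k : ℕ, deriv (deriv (fun t => ubar (n - 1 - (k : ℤ), t))) x with hT2
  set T3 : ℝ := ∑' k : ℕ, deriv (deriv (deriv (fun t => ubar (n - 1 - (k : ℤ), t)))) x with hT3
  ring
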